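/- Let Λ be a nonzero Hermiticity-preserving linear map from d×d to d'×d' complex matrices which is trace-annihilating, i.e. tr Λ(X) = 0 for every X. Then there exist quantum channels Φ₁, Φ₂ from d×d to d'×d' matrices and a constant c > 0 such that cΛ = Φ₁ − Φ₂. -/

import Mathlib

open scoped ComplexOrder Kronecker
open Matrix

noncomputable section

/-- Square complex matrices of size `d`. -/
abbrev Mat (d : ℕ) : Type := Matrix (Fin d) (Fin d) ℂ

/-- Square complex matrices on the bipartite space `ℂ^dA ⊗ ℂ^dB`. -/
abbrev BMat (dA dB : ℕ) : Type := Matrix (Fin dA × Fin dB) (Fin dA × Fin dB) ℂ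

/-- A quantum state: a positive semidefinite matrix of unit trace. -/
def IsState {n : Type*} [Fintype n] (ρ : Matrix n n ℂ) : Prop :=
  ρ.PosSemidef ∧ ρ.trace = 1

/-- Trace norm `‖A‖₁ = tr √(Aᴴ A)`. -/
noncomputable def traceNorm {n : Type*} [Fintype n] [DecidableEq n] (A : Matrix n n ℂ) : ℝ :=
  (((Matrix.posSemidef_conjTranspose_mul_self A).1.eigenvectorUnitary : Matrix n n ℂ) *
    diagonal (((↑) : ℝ → ℂ) ∘ Real.sqrt ∘ (Matrix.posSemidef_conjTranspose_mul_self A).1.eigenvalues) *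
    (star (Matrix.posSemidef_conjTranspose_mul_self A).1.eigenvectorUnitary : Matrix n n ℂ)).trace.re

/-- Operator (spectral) norm of a square complex matrix. -/
noncomputable def opNorm {n : Type*} [Fintype n] [DecidableEq n] (A : Matrix n n ℂ) : ℝ :=
  ‖LinearMap.toContinuousLinearMap (Matrix.toEuclideanLin A)‖

/-- The partial action `id_{dA} ⊗ Λ` of a map `Λ` on block matrices. -/
def idTensor {dA dB dC : ℕ} (Λ : Mat dB → Mat dC) (ρ : BMat dA dB) : BMat dA dC :=
  fun p q => Λ (fun i j => ρ (p.1, i) (q.1, j)) p.2 q.2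

/-- `Λ` is `k`-positive: `id_k ⊗ Λ` preserves positive semidefiniteness. -/
def kPositive (k : ℕ) {dB dC : ℕ} (Λ : Mat dB → Mat dC) : Prop :=
  ∀ ρ : BMat k dB, ρ.PosSemidef → (idTensor Λ ρ).PosSemidef

/-- Completely positive: `k`-positive for every `k`. -/
def CompletelyPositive {dB dC : ℕ} (Λ : Mat dB → Mat dC) : Prop :=
  ∀ k : ℕ, kPositive k Λ

/-- Trace-preserving map. -/
def TracePreserving {dB dC : ℕ} (Λ : Mat dB → Mat dC) : Prop :=
  ∀ X : Mat dB, (Λ X).trace = X.trace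

/-- A quantum channel: completely positive and trace-preserving linear map. -/
def IsChannel {dB dC : ℕ} (Λ : Mat dB →ₗ[ℂ] Mat dC) : Prop :=
  CompletelyPositive (⇑Λ) ∧ TracePreserving (⇑Λ)

/-- Schmidt rank of a bipartite vector: the minimal number of product terms in a
decomposition `ψ = Σ_t a_t ⊗ b_t`. -/
def SchmidtRank {dA dB : ℕ} (ψ : Fin dA × Fin dB → ℂ) : ℕ :=
  sInf {r : ℕ | ∃ (a : Fin r → Fin dA → ℂ) (b : Fin r → Fin dB → ℂ),
    ∀ i j, ψ (i, j) = ∑ t, a t i * b t j}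

/-- The Schmidt number of `ρ` is at most `k`: there is a pure-state decomposition
`ρ = Σ_i p_i |ψ_i⟩⟨ψ_i|` with all Schmidt ranks at most `k`. -/
def SchmidtNumberLE {dA dB : ℕ} (ρ : BMat dA dB) (k : ℕ) : Prop :=
  ∃ (n : ℕ) (p : Fin n → ℝ) (ψ : Fin n → (Fin dA × Fin dB → ℂ)),
    (∀ i, 0 ≤ p i) ∧ (∀ i, ∑ x, ‖ψ i x‖ ^ 2 = 1) ∧
    (∀ i, SchmidtRank (ψ i) ≤ k) ∧
    ρ = ∑ i, (p i : ℂ) • Matrix.vecMulVec (ψ i) (star (ψ i))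

/-- The (generalized) Schmidt-number robustness `R_{S_k}`. -/
noncomputable def robustness {dA dB : ℕ} (k : ℕ) (ρ : BMat dA dB) : ℝ :=
  sInf {R : ℝ | 0 ≤ R ∧ ∃ σ τ : BMat dA dB,
    IsState σ ∧ SchmidtNumberLE σ k ∧ IsState τ ∧
    ρ = ((1 + R : ℝ) : ℂ) • σ - (R : ℂ) • τ}

/-- Partial trace over the first tensor factor. -/
def ptraceFirst {dA dB : ℕ} (ρ : BMat dA dB) : Mat dB :=
  fun i j => ∑ a : Fin dA, ρ (a, i) (a, j)

/-- Partial trace over the second tensor factor. -/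
def ptraceSecond {dA dB : ℕ} (ρ : BMat dA dB) : Mat dA :=
  fun a b => ∑ i : Fin dB, ρ (a, i) (b, i)

/-- Embed a `BMat dA d` as the top-left block (in the second factor) of a `BMat dA (d+1)`. -/
def padSnd {dA d : ℕ} (M : BMat dA d) : BMat dA (d + 1) :=
  fun p q =>
    if h : (p.2 : ℕ) < d ∧ (q.2 : ℕ) < d then M (p.1, ⟨p.2, h.1⟩) (q.1, ⟨q.2, h.2⟩) else 0

/-- The shift unitary `X|n⟩ = |n+1 mod d⟩`. -/
def shiftMat (d : ℕ) : Mat d :=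
  fun i j => if (i : ℕ) = ((j : ℕ) + 1) % d then 1 else 0

/-- The clock unitary `Z|n⟩ = e^{2πin/d}|n⟩`. -/
def clockMat (d : ℕ) : Mat d :=
  fun i j => if i = j then Complex.exp (2 * Real.pi * Complex.I * (i : ℕ) / d) else 0

/-- The Heisenberg-Weyl unitary `X^k Z^l`. -/
def heisenbergU (d k l : ℕ) : Mat d := shiftMat d ^ k * clockMat d ^ l

/-- The maximally entangled unit vector `|φ⁺⟩ = (1/√d) Σ_n |n⟩ ⊗ |n⟩`. -/
def phiPlus (d : ℕ) : Fin d × Fin d → ℂ :=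
  fun p => if p.1 = p.2 then ((1 / Real.sqrt d : ℝ) : ℂ) else 0

/-- The projection `|φ⁺⟩⟨φ⁺|`. -/
def phiProj (d : ℕ) : BMat d d := Matrix.vecMulVec (phiPlus d) (star (phiPlus d))

/-- The Bell basis projection `M_{k,l} = (1 ⊗ X^k Z^l)|φ⁺⟩⟨φ⁺|(1 ⊗ X^k Z^l)ᴴ`. -/
def bellProj (d k l : ℕ) : BMat d d :=
  ((1 : Mat d) ⊗ₖ heisenbergU d k l) * phiProj d * ((1 : Mat d) ⊗ₖ heisenbergU d k l)ᴴ

/-- The canonical inclusion isometry `ℂ^d → ℂ^D`. -/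
def inclMat (d D : ℕ) : Matrix (Fin D) (Fin d) ℂ :=
  fun i j => if (i : ℕ) = (j : ℕ) then 1 else 0

/-- Optimal guessing probability for the discrimination of the (sub)channels `Λ i`
applied with a priori probabilities `p i`, using the input state `ρ`. -/
noncomputable def pguess {dA dB D N : ℕ} (p : Fin N → ℝ) (Λ : Fin N → (Mat dB → Mat D))
    (ρ : BMat dA dB) : ℝ :=
  sSup {x : ℝ | ∃ M : Fin N → Matrix (Fin dA × Fin D) (Fin dA × Fin D) ℂ,
    (∀ i, (M i).PosSemidef) ∧ (∑ i, M i) = 1 ∧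
    x = ∑ i, p i * ((M i * idTensor (Λ i) ρ).trace).re}

/-- Optimal guessing probability over all input states of Schmidt number at most `k`. -/
noncomputable def pguessK (dA : ℕ) {dB D N : ℕ} (k : ℕ) (p : Fin N → ℝ)
    (Λ : Fin N → (Mat dB → Mat D)) : ℝ :=
  sSup {x : ℝ | ∃ σ : BMat dA dB, IsState σ ∧ SchmidtNumberLE σ k ∧ x = pguess p Λ σ}

end

/-! The Choi matrix `J(Λ)` of a Hermiticity-preserving map is Hermitian, so `d'⁻¹ • 1 + c • J(Λ)` is
positive semidefinite for small `c > 0`. This is the Choi matrix of `Φ₁ := c • Λ + Φ₂`, where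
`Φ₂ X = (tr X / d') • 1` is the completely depolarizing channel; a positive semidefinite Choi matrix
yields a Kraus decomposition, hence complete positivity, and `Φ₁` preserves the trace because `Λ`
annihilates it. -/

section Kraus

variable {d d' k : ℕ}

lemma idTensor_sum {ι : Type*} (s : Finset ι) (Θ : ι → Mat d → Mat d') (ρ : BMat k d) :
    idTensor (fun X => ∑ i ∈ s, Θ i X) ρ = ∑ i ∈ s, idTensor (Θ i) ρ := by
  ext p q
  simp [idTensor, Matrix.sum_apply]

lemma idTensor_mul_mul_conjTranspose (K : Matrix (Fin d') (Fin d) ℂ) (ρ : BMat k d) :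
    idTensor (fun X : Mat d => K * X * Kᴴ) ρ = ((1 : Mat k) ⊗ₖ K) * ρ * ((1 : Mat k) ⊗ₖ K)ᴴ := by
  ext ⟨a, m⟩ ⟨b, n⟩
  simp [idTensor, mul_apply, conjTranspose_apply, kroneckerMap_apply, one_apply,
    Fintype.sum_prod_type, apply_ite (starRingEnd ℂ)]
  rfl

lemma completelyPositive_sum_mul_mul_conjTranspose {ι : Type*} [Fintype ι]
    (K : ι → Matrix (Fin d') (Fin d) ℂ) :
    CompletelyPositive fun X : Mat d => ∑ i, K i * X * (K i)ᴴ := by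
  intro k ρ hρ
  rw [idTensor_sum]
  exact posSemidef_sum _ fun i _ =>
    idTensor_mul_mul_conjTranspose (K i) ρ ▸ hρ.mul_mul_conjTranspose_same _

end Kraus

section Choi

variable {m n : Type*} [DecidableEq m]

def choiMatrix : (Matrix m m ℂ →ₗ[ℂ] Matrix n n ℂ) →ₗ[ℂ] Matrix (m × n) (m × n) ℂ where
  toFun Θ := Matrix.of fun p q => Θ (single p.1 q.1 1) p.2 q.2
  map_add' _ _ := rfl
  map_smul' _ _ := rfl

@[simp]
lemma choiMatrix_apply (Θ : Matrix m m ℂ →ₗ[ℂ] Matrix n n ℂ) (i j : m) (x y : n) :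
    choiMatrix Θ (i, x) (j, y) = Θ (single i j 1) x y :=
  rfl

lemma apply_eq_sum_choiMatrix [Fintype m] (Θ : Matrix m m ℂ →ₗ[ℂ] Matrix n n ℂ)
    (X : Matrix m m ℂ) (x y : n) : Θ X x y = ∑ i, ∑ j, X i j * choiMatrix Θ (i, x) (j, y) := by
  have hX : X = ∑ i, ∑ j, X i j • single i j 1 := by
    conv_lhs => rw [matrix_eq_sum_single X]
    simp [smul_single]
  conv_lhs => rw [hX]
  simp only [map_sum, map_smul, Matrix.sum_apply, Matrix.smul_apply, smul_eq_mul,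
    choiMatrix_apply]

lemma isHermitian_choiMatrix {Θ : Matrix m m ℂ →ₗ[ℂ] Matrix n n ℂ}
    (hΘ : ∀ X, Θ Xᴴ = (Θ X)ᴴ) : (choiMatrix Θ).IsHermitian := by
  ext ⟨i, x⟩ ⟨j, y⟩
  rw [conjTranspose_apply, choiMatrix_apply, choiMatrix_apply, ← conjTranspose_apply,
    ← hΘ, conjTranspose_single, star_one]

open scoped MatrixOrder in
lemma exists_kraus_of_posSemidef_choiMatrix [Fintype m] [Fintype n] [DecidableEq n]
    {Θ : Matrix m m ℂ →ₗ[ℂ] Matrix n n ℂ} (hΘ : (choiMatrix Θ).PosSemidef) :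
    ∃ K : m × n → Matrix n m ℂ, ∀ X, Θ X = ∑ r, K r * X * (K r)ᴴ := by
  set S := CFC.sqrt (choiMatrix Θ)
  have hS : S * Sᴴ = choiMatrix Θ := by
    rw [← star_eq_conjTranspose, (CFC.sqrt_nonneg _).isSelfAdjoint.star_eq,
      CFC.sqrt_mul_sqrt_self _ hΘ.nonneg]
  -- the Kraus operators are the columns of a square root of the Choi matrix
  refine ⟨fun r => Matrix.of fun x i => S (i, x) r, fun X => ?_⟩
  ext x y
  simp only [apply_eq_sum_choiMatrix, ← hS, mul_apply, Matrix.sum_apply, conjTranspose_apply,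
    of_apply, Finset.mul_sum, Finset.sum_mul]
  rw [Finset.sum_comm]
  conv_rhs => rw [Finset.sum_comm]
  refine Finset.sum_congr rfl fun j _ => ?_
  rw [Finset.sum_comm]
  exact Finset.sum_congr rfl fun r _ => Finset.sum_congr rfl fun i _ => by ring

end Choi

lemma completelyPositive_of_posSemidef_choiMatrix {d d' : ℕ} {Θ : Mat d →ₗ[ℂ] Mat d'}
    (hΘ : (choiMatrix Θ).PosSemidef) : CompletelyPositive Θ := by
  obtain ⟨K, hK⟩ := exists_kraus_of_posSemidef_choiMatrix hΘ
  rw [show ⇑Θ = _ from funext hK]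
  exact completelyPositive_sum_mul_mul_conjTranspose K

open scoped Matrix.Norms.L2Operator MatrixOrder in
lemma Matrix.IsHermitian.exists_pos_posSemidef_smul_one_add_smul {n : Type*} [Fintype n]
    [DecidableEq n] {H : Matrix n n ℂ} (hH : H.IsHermitian) {a : ℝ} (ha : 0 < a) :
    ∃ c : ℝ, 0 < c ∧ ((a : ℂ) • 1 + (c : ℂ) • H).PosSemidef := by
  have hnorm : ((‖H‖ : ℂ) • 1 + H).PosSemidef := by
    have := hH.isSelfAdjoint.neg_algebraMap_norm_le_self
    rw [le_iff, sub_neg_eq_add, Algebra.algebraMap_eq_smul_one, add_comm] at this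
    rwa [RCLike.real_smul_eq_coe_smul (K := ℂ)] at this
  set c := a / (‖H‖ + 1)
  have hcH : c * ‖H‖ ≤ a := by
    rw [div_mul_eq_mul_div, div_le_iff₀ (by positivity)]
    nlinarith [norm_nonneg H]
  have hsplit : (a : ℂ) • 1 + (c : ℂ) • H =
      ((a - c * ‖H‖ : ℝ) : ℂ) • 1 + (c : ℂ) • ((‖H‖ : ℂ) • 1 + H) := by
    rw [smul_add, smul_smul, ← add_assoc, ← add_smul]
    push_cast
    ring_nf
  refine ⟨c, by positivity, hsplit ▸ ?_⟩
  exact (PosSemidef.one.smul (Complex.zero_le_real.2 (sub_nonneg.2 hcH))).add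
    (hnorm.smul (Complex.zero_le_real.2 (by positivity)))

section Depolarizing

variable (d d' : ℕ)

noncomputable def completelyDepolarizing : Mat d →ₗ[ℂ] Mat d' :=
  (traceLinearMap (Fin d) ℂ ℂ).smulRight ((d' : ℂ)⁻¹ • 1)

variable {d d'}

lemma completelyDepolarizing_apply (X : Mat d) :
    completelyDepolarizing d d' X = (X.trace * (d' : ℂ)⁻¹) • 1 := by
  simp [completelyDepolarizing, mul_smul]

lemma choiMatrix_completelyDepolarizing :
    choiMatrix (completelyDepolarizing d d') = (d' : ℂ)⁻¹ • 1 := by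
  ext ⟨i, x⟩ ⟨j, y⟩
  rcases eq_or_ne i j with rfl | hij
  · simp [completelyDepolarizing_apply, one_apply]
  · simp [completelyDepolarizing_apply, one_apply, hij, trace_single_eq_of_ne]

lemma isChannel_completelyDepolarizing (hd' : 0 < d') :
    IsChannel (completelyDepolarizing d d') := by
  refine ⟨completelyPositive_of_posSemidef_choiMatrix ?_, fun X => ?_⟩
  · rw [choiMatrix_completelyDepolarizing]
    exact PosSemidef.one.smul (by positivity)
  · have : (d' : ℂ) ≠ 0 := by exact_mod_cast hd'.ne'
    simp [completelyDepolarizing_apply, this]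

end Depolarizing

/-- every nonzero Hermiticity-preserving trace-annihilating map is
proportional to a difference of two quantum channels. -/
theorem stmt4 {d d' : ℕ} (Λ : Mat d →ₗ[ℂ] Mat d') (hΛ : Λ ≠ 0)
    (hherm : ∀ X : Mat d, Λ Xᴴ = (Λ X)ᴴ) (hTA : ∀ X : Mat d, (Λ X).trace = 0) :
    ∃ (Φ₁ Φ₂ : Mat d →ₗ[ℂ] Mat d') (c : ℝ),
      IsChannel Φ₁ ∧ IsChannel Φ₂ ∧ 0 < c ∧ (c : ℂ) • Λ = Φ₁ - Φ₂ := by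
  have hd' : 0 < d' := by
    refine Nat.pos_of_ne_zero fun hd' => hΛ ?_
    subst hd'
    ext X i
    exact i.elim0
  obtain ⟨c, hc, hpsd⟩ := (isHermitian_choiMatrix hherm).exists_pos_posSemidef_smul_one_add_smul
    (a := (d' : ℝ)⁻¹) (by positivity)
  set Φ := completelyDepolarizing d d'
  have hΦ : IsChannel Φ := isChannel_completelyDepolarizing hd'
  refine ⟨(c : ℂ) • Λ + Φ, Φ, c, ⟨?_, fun X => ?_⟩, hΦ, hc, by abel⟩
  · refine completelyPositive_of_posSemidef_choiMatrix ?_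
    rw [map_add, map_smul, choiMatrix_completelyDepolarizing, add_comm]
    simpa using hpsd
  · simp [hTA, hΦ.2 X]
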